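/- Let H0 and H1 be complex Hilbert spaces, let A0 on H0 and A1 on H1 be bounded operators, and let δ > 0. Assume: (a) for every bounded Y : H0 → H1 there exists a bounded X : H0 → H1 with X A0 − A1 X = Y and every bounded X : H0 → H1 satisfies δ·‖X‖ ≤ ‖X A0 − A1 X‖; (b) likewise, for every bounded Y' : H1 → H0 there exists a bounded X' : H1 → H0 with X' A1 − A0 X' = Y' and every bounded X' : H1 → H0 satisfies δ·‖X'‖ ≤ ‖X' A1 − A0 X'‖. Let B : H1 → H0 and C : H0 → H1 be bounded operators such that √(‖B‖·‖C‖) < δ/2, and let L be the block operator matrix on H = H0 ⊕ H1 given by L(x0,x1) = (A0 x0 + B x1, C x0 + A1 x1). Then there exist bounded operators K : H0 → H1 with 2·‖B‖·‖K‖ ≤ δ solving K A0 − A1 K + K B K = C, and K' : H1 → H0 with 2·‖C‖·‖K'‖ ≤ δ solving K' A1 − A0 K' + K' C K' = B, such that ‖K‖·‖K'‖ < 1, the graph subspaces G(K) = {(x0, K x0)} and G'(K') = {(K' x1, x1)} are invariant under L, and H is the direct sum of G(K) and G'(K') (they intersect trivially and span H). (Bounded-operator version of Theorem 4.4 of the paper.)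 -/

import Mathlib

/-!
Each Riccati equation `K A0 - A1 K + K B K = C` is the fixed-point problem
`K = S⁻¹ (C - K B K)` for the Sylvester operator `S X = X A0 - A1 X`, whose inverse has norm at
most `1 / δ`. This map sends the ball of radius `r` into itself and contracts it as soon as
`‖B‖ r² + ‖C‖ ≤ δ r` and `2 ‖B‖ r < δ`; the smaller root `r` of `‖B‖ r² - δ r + ‖C‖` does both,
precisely because `√(‖B‖ ‖C‖) < δ / 2`. The radii obtained for `K` and `K'` multiply to
`(δ - s) / (δ + s) < 1`, where `s = √(δ² - 4 ‖B‖ ‖C‖)`, so `1 - K' K` is invertible by a Neumann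
series, which makes `H` the direct sum of the two graphs. Their invariance under `L` is the
Riccati equation read pointwise.
-/

open Set Metric

theorem exists_isFixedPt_of_lipschitzOnWith {α : Type*} [MetricSpace α] {s : Set α}
    (hs : IsComplete s) (hne : s.Nonempty) {f : α → α} (hf : MapsTo f s s) {κ : NNReal}
    (hκ : κ < 1) (hlip : LipschitzOnWith κ f s) : ∃ y ∈ s, Function.IsFixedPt f y := by
  obtain ⟨x, hx⟩ := hne
  obtain ⟨y, hys, hy, -⟩ := ContractingWith.exists_fixedPoint' hs hf
    ⟨hκ, hlip.mapsToRestrict hf⟩ hx (edist_ne_top _ _)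
  exact ⟨y, hys, hy⟩

theorem AddMonoidHom.exists_add_eq_of_quadratic_perturbation {E F : Type*}
    [NormedAddCommGroup E] [CompleteSpace E] [NormedAddCommGroup F]
    (S : E →+ F) (hS : Function.Surjective S) {δ : ℝ} (hδ : 0 < δ)
    (hSδ : ∀ X, δ * ‖X‖ ≤ ‖S X‖) {q : E → F} {β : ℝ} (hβ : 0 ≤ β) (hq0 : q 0 = 0)
    (hq : ∀ X Y, ‖q X - q Y‖ ≤ β * (‖X‖ + ‖Y‖) * ‖X - Y‖) (c : F) {r : ℝ}
    (hr : β * r ^ 2 + ‖c‖ ≤ δ * r) (hβr : 2 * β * r < δ) :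
    ∃ K, S K + q K = c ∧ ‖K‖ ≤ r := by
  set T := Function.surjInv hS
  have hST : ∀ Y, S (T Y) = Y := Function.surjInv_eq hS
  have hT : ∀ Y, δ * ‖T Y‖ ≤ ‖Y‖ := fun Y => by simpa only [hST] using hSδ (T Y)
  have hr0 : 0 ≤ r := by nlinarith [norm_nonneg c, sq_nonneg r]
  have hq_norm : ∀ X, ‖q X‖ ≤ β * ‖X‖ ^ 2 := fun X => by
    simpa only [hq0, sub_zero, norm_zero, add_zero, ← sq, mul_assoc] using hq X 0
  have hmaps : MapsTo (fun X => T (c - q X)) (closedBall 0 r) (closedBall 0 r) := by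
    intro X hX
    rw [mem_closedBall_zero_iff] at hX ⊢
    have : ‖c - q X‖ ≤ δ * r := calc
      ‖c - q X‖ ≤ ‖c‖ + β * ‖X‖ ^ 2 := (norm_sub_le _ _).trans (by linarith [hq_norm X])
      _ ≤ ‖c‖ + β * r ^ 2 := by gcongr
      _ ≤ δ * r := by linarith
    exact le_of_mul_le_mul_left ((hT _).trans this) hδ
  set κ : NNReal := ⟨2 * β * r / δ, by positivity⟩
  have hκ : κ < 1 := by
    rw [← NNReal.coe_lt_coe]
    exact (div_lt_one hδ).2 hβr
  have hlip : LipschitzOnWith κ (fun X => T (c - q X)) (closedBall 0 r) := by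
    refine LipschitzOnWith.of_dist_le_mul fun X hX Y hY => ?_
    rw [mem_closedBall_zero_iff] at hX hY
    rw [dist_eq_norm, dist_eq_norm]
    change ‖T (c - q X) - T (c - q Y)‖ ≤ 2 * β * r / δ * ‖X - Y‖
    rw [div_mul_eq_mul_div, le_div_iff₀' hδ]
    calc δ * ‖T (c - q X) - T (c - q Y)‖
        ≤ ‖S (T (c - q X) - T (c - q Y))‖ := hSδ _
      _ = ‖q X - q Y‖ := by rw [map_sub, hST, hST, sub_sub_sub_cancel_left, norm_sub_rev]
      _ ≤ β * (‖X‖ + ‖Y‖) * ‖X - Y‖ := hq X Y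
      _ ≤ β * (r + r) * ‖X - Y‖ := by gcongr
      _ = 2 * β * r * ‖X - Y‖ := by ring
  obtain ⟨K, hKr, hK⟩ := exists_isFixedPt_of_lipschitzOnWith isClosed_closedBall.isComplete
    (nonempty_closedBall.2 hr0) hmaps hκ hlip
  refine ⟨K, ?_, mem_closedBall_zero_iff.1 hKr⟩
  rw [← hK.eq, hST, hK.eq, sub_add_cancel]

/-- The smaller root of `β r² - δ r + γ`, in a form that stays valid for `β = 0`. -/
noncomputable def riccatiRadius (β γ δ : ℝ) : ℝ := 2 * γ / (δ + √(δ ^ 2 - 4 * β * γ))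

section riccatiRadius

variable {β γ δ : ℝ}

theorem two_mul_mul_riccatiRadius (hδ : 0 < δ) (h : 4 * β * γ ≤ δ ^ 2) :
    2 * β * riccatiRadius β γ δ = δ - √(δ ^ 2 - 4 * β * γ) := by
  have hs := Real.sq_sqrt (sub_nonneg.2 h)
  have hpos : 0 < δ + √(δ ^ 2 - 4 * β * γ) := by positivity
  rw [riccatiRadius, eq_sub_iff_add_eq, mul_div_assoc', div_add' _ _ _ hpos.ne',
    div_eq_iff hpos.ne']
  linear_combination hs

theorem riccatiRadius_quadratic (hδ : 0 < δ) (h : 4 * β * γ ≤ δ ^ 2) :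
    β * riccatiRadius β γ δ ^ 2 + γ = δ * riccatiRadius β γ δ := by
  have h2 := two_mul_mul_riccatiRadius hδ h
  have hpos : 0 < δ + √(δ ^ 2 - 4 * β * γ) := by positivity
  have hr : riccatiRadius β γ δ * (δ + √(δ ^ 2 - 4 * β * γ)) = 2 * γ :=
    div_mul_cancel₀ _ hpos.ne'
  linear_combination (riccatiRadius β γ δ / 2) * h2 - hr / 2

theorem two_mul_mul_riccatiRadius_lt (hδ : 0 < δ) (h : 4 * β * γ < δ ^ 2) :
    2 * β * riccatiRadius β γ δ < δ := by
  rw [two_mul_mul_riccatiRadius hδ h.le, sub_lt_self_iff, Real.sqrt_pos, sub_pos]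
  exact h

theorem riccatiRadius_mul_riccatiRadius_swap_lt_one (hδ : 0 < δ) (h : 4 * β * γ < δ ^ 2) :
    riccatiRadius β γ δ * riccatiRadius γ β δ < 1 := by
  have hs : 0 < √(δ ^ 2 - 4 * β * γ) := Real.sqrt_pos.2 (sub_pos.2 h)
  have hpos : 0 < δ + √(δ ^ 2 - 4 * β * γ) := by positivity
  have h2 := two_mul_mul_riccatiRadius hδ h.le
  have hswap : riccatiRadius γ β δ = 2 * β / (δ + √(δ ^ 2 - 4 * β * γ)) := by
    rw [riccatiRadius, mul_right_comm 4 γ β]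
  rw [hswap, ← mul_div_assoc, mul_comm, h2, div_lt_one hpos]
  linarith

end riccatiRadius

section Operators

variable {𝕜 E F : Type*} [NontriviallyNormedField 𝕜]
  [NormedAddCommGroup E] [NormedSpace 𝕜 E] [NormedAddCommGroup F] [NormedSpace 𝕜 F]

theorem ContinuousLinearMap.norm_comp_comp_sub_comp_comp_le (X Y : E →L[𝕜] F) (W : F →L[𝕜] E) :
    ‖(X ∘L W) ∘L X - (Y ∘L W) ∘L Y‖ ≤ ‖W‖ * (‖X‖ + ‖Y‖) * ‖X - Y‖ := by
  have hsplit : (X ∘L W) ∘L X - (Y ∘L W) ∘L Y = (X ∘L W) ∘L (X - Y) + ((X - Y) ∘L W) ∘L Y := by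
    simp only [comp_sub, sub_comp]
    abel
  rw [hsplit]
  calc ‖(X ∘L W) ∘L (X - Y) + ((X - Y) ∘L W) ∘L Y‖
      ≤ ‖X‖ * ‖W‖ * ‖X - Y‖ + ‖X - Y‖ * ‖W‖ * ‖Y‖ := by
        refine (norm_add_le _ _).trans (add_le_add ?_ ?_) <;>
          exact (opNorm_comp_le _ _).trans (by gcongr; exact opNorm_comp_le _ _)
    _ = ‖W‖ * (‖X‖ + ‖Y‖) * ‖X - Y‖ := by ring

def sylvester (A0 : E →L[𝕜] E) (A1 : F →L[𝕜] F) : (E →L[𝕜] F) →+ (E →L[𝕜] F) where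
  toFun X := X ∘L A0 - A1 ∘L X
  map_zero' := by simp
  map_add' X Y := by
    simp only [ContinuousLinearMap.add_comp, ContinuousLinearMap.comp_add]
    abel

theorem exists_riccati_solution [CompleteSpace F] (A0 : E →L[𝕜] E) (A1 : F →L[𝕜] F)
    (B : F →L[𝕜] E) (C : E →L[𝕜] F) {δ : ℝ} (hδ : 0 < δ)
    (hSurj : ∀ Y : E →L[𝕜] F, ∃ X : E →L[𝕜] F, X ∘L A0 - A1 ∘L X = Y)
    (hBound : ∀ X : E →L[𝕜] F, δ * ‖X‖ ≤ ‖X ∘L A0 - A1 ∘L X‖) {r : ℝ}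
    (hr : ‖B‖ * r ^ 2 + ‖C‖ ≤ δ * r) (hBr : 2 * ‖B‖ * r < δ) :
    ∃ K : E →L[𝕜] F, K ∘L A0 - A1 ∘L K + (K ∘L B) ∘L K = C ∧ ‖K‖ ≤ r :=
  (sylvester A0 A1).exists_add_eq_of_quadratic_perturbation hSurj hδ hBound (norm_nonneg B)
    (by simp) (fun X Y => X.norm_comp_comp_sub_comp_comp_le Y B) C hr hBr

theorem ContinuousLinearMap.bijective_one_sub_comp [CompleteSpace E] {K : E →L[𝕜] F}
    {K' : F →L[𝕜] E} (h : ‖K‖ * ‖K'‖ < 1) : Function.Bijective ⇑(1 - K' ∘L K) :=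
  isUnit_iff_bijective.1 <| isUnit_one_sub_of_norm_lt_one <|
    (opNorm_comp_le K' K).trans_lt (by rwa [mul_comm])

def graphLp (K : E →L[𝕜] F) : Set (WithLp 2 (E × F)) :=
  {x | ∃ x0 : E, x = (WithLp.equiv 2 (E × F)).symm (x0, K x0)}

def graphLp' (K' : F →L[𝕜] E) : Set (WithLp 2 (E × F)) :=
  {x | ∃ x1 : F, x = (WithLp.equiv 2 (E × F)).symm (K' x1, x1)}

variable {A0 : E →L[𝕜] E} {A1 : F →L[𝕜] F} {B : F →L[𝕜] E} {C : E →L[𝕜] F}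
  {L : WithLp 2 (E × F) → WithLp 2 (E × F)}

theorem riccati_apply {K : E →L[𝕜] F} (hK : K ∘L A0 - A1 ∘L K + (K ∘L B) ∘L K = C) (x0 : E) :
    C x0 + A1 (K x0) = K (A0 x0 + B (K x0)) := by
  rw [← hK]
  simp only [add_apply, sub_apply, ContinuousLinearMap.comp_apply, map_add]
  abel

theorem mapsTo_graphLp
    (hL : ∀ x0 x1, L ((WithLp.equiv 2 (E × F)).symm (x0, x1)) =
      (WithLp.equiv 2 (E × F)).symm (A0 x0 + B x1, C x0 + A1 x1))
    {K : E →L[𝕜] F} (hK : K ∘L A0 - A1 ∘L K + (K ∘L B) ∘L K = C) :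
    MapsTo L (graphLp K) (graphLp K) := by
  rintro _ ⟨x0, rfl⟩
  exact ⟨A0 x0 + B (K x0), by rw [hL, riccati_apply hK]⟩

theorem mapsTo_graphLp'
    (hL : ∀ x0 x1, L ((WithLp.equiv 2 (E × F)).symm (x0, x1)) =
      (WithLp.equiv 2 (E × F)).symm (A0 x0 + B x1, C x0 + A1 x1))
    {K' : F →L[𝕜] E} (hK' : K' ∘L A1 - A0 ∘L K' + (K' ∘L C) ∘L K' = B) :
    MapsTo L (graphLp' K') (graphLp' K') := by
  rintro _ ⟨x1, rfl⟩
  refine ⟨C (K' x1) + A1 x1, ?_⟩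
  rw [hL, add_comm (A0 _), riccati_apply hK', add_comm]

theorem graphLp_inter_graphLp' {K : E →L[𝕜] F} {K' : F →L[𝕜] E}
    (h : Function.Injective ⇑(1 - K' ∘L K)) : graphLp K ∩ graphLp' K' = {0} := by
  refine subset_antisymm ?_ (singleton_subset_iff.2 ⟨⟨0, ?_⟩, ⟨0, ?_⟩⟩)
  · rintro _ ⟨⟨x0, rfl⟩, ⟨x1, hx⟩⟩
    obtain ⟨h0, h1⟩ := Prod.ext_iff.1 ((WithLp.equiv 2 (E × F)).symm.injective hx)
    dsimp only at h0 h1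
    have hx0 : x0 = 0 := h (by simp [h1, ← h0])
    simp [hx0]
  all_goals rw [map_zero]; exact (WithLp.toLp_zero (V := E × F) 2).symm

theorem exists_add_mem_graphLp {K : E →L[𝕜] F} {K' : F →L[𝕜] E}
    (h : Function.Surjective ⇑(1 - K' ∘L K)) (x : WithLp 2 (E × F)) :
    ∃ u ∈ graphLp K, ∃ v ∈ graphLp' K', x = u + v := by
  obtain ⟨⟨y0, y1⟩⟩ := x
  obtain ⟨x0, hx0⟩ := h (y0 - K' y1)
  refine ⟨_, ⟨x0, rfl⟩, _, ⟨y1 - K x0, rfl⟩, ?_⟩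
  simp only [WithLp.equiv_symm_apply, ← WithLp.toLp_add, Prod.mk_add_mk]
  simp only [sub_apply, one_apply_eq_self, ContinuousLinearMap.comp_apply] at hx0
  congr 2
  · rw [map_sub]
    linear_combination (norm := module) -hx0
  · abel

end Operators

/-- Bounded-operator version of Theorem 4.4 of the paper: assume the two Sylvester
operators `X ↦ X A0 - A1 X` and `X' ↦ X' A1 - A0 X'` are surjective and bounded below by
`δ > 0`, and let `B : H1 → H0`, `C : H0 → H1` satisfy `√(‖B‖‖C‖) < δ/2`. For the block
operator matrix `L(x0,x1) = (A0 x0 + B x1, C x0 + A1 x1)` on `H = H0 ⊕ H1`, there exist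
bounded solutions `K` (with `2‖B‖‖K‖ ≤ δ`) of `K A0 - A1 K + K B K = C` and `K'`
(with `2‖C‖‖K'‖ ≤ δ`) of `K' A1 - A0 K' + K' C K' = B` such that `‖K‖·‖K'‖ < 1`, the
graph subspaces `G(K)` and `G'(K')` are invariant under `L`, and `H` is their direct sum. -/
theorem block_diagonalization_riccati
    {H0 : Type*} [NormedAddCommGroup H0] [InnerProductSpace ℂ H0] [CompleteSpace H0]
    {H1 : Type*} [NormedAddCommGroup H1] [InnerProductSpace ℂ H1] [CompleteSpace H1]
    (A0 : H0 →L[ℂ] H0) (A1 : H1 →L[ℂ] H1) (δ : ℝ) (hδ : 0 < δ)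
    (hSurj : ∀ Y : H0 →L[ℂ] H1, ∃ X : H0 →L[ℂ] H1, X ∘L A0 - A1 ∘L X = Y)
    (hBound : ∀ X : H0 →L[ℂ] H1, δ * ‖X‖ ≤ ‖X ∘L A0 - A1 ∘L X‖)
    (hSurj' : ∀ Y' : H1 →L[ℂ] H0, ∃ X' : H1 →L[ℂ] H0, X' ∘L A1 - A0 ∘L X' = Y')
    (hBound' : ∀ X' : H1 →L[ℂ] H0, δ * ‖X'‖ ≤ ‖X' ∘L A1 - A0 ∘L X'‖)
    (B : H1 →L[ℂ] H0) (C : H0 →L[ℂ] H1)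
    (hBC : Real.sqrt (‖B‖ * ‖C‖) < δ / 2)
    (L : WithLp 2 (H0 × H1) →L[ℂ] WithLp 2 (H0 × H1))
    (hL : ∀ (x0 : H0) (x1 : H1),
      L ((WithLp.equiv 2 (H0 × H1)).symm (x0, x1)) =
        (WithLp.equiv 2 (H0 × H1)).symm (A0 x0 + B x1, C x0 + A1 x1)) :
    ∃ (K : H0 →L[ℂ] H1) (K' : H1 →L[ℂ] H0),
      2 * ‖B‖ * ‖K‖ ≤ δ ∧ K ∘L A0 - A1 ∘L K + (K ∘L B) ∘L K = C ∧
      2 * ‖C‖ * ‖K'‖ ≤ δ ∧ K' ∘L A1 - A0 ∘L K' + (K' ∘L C) ∘L K' = B ∧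
      ‖K‖ * ‖K'‖ < 1 ∧
      (∀ u ∈ {x : WithLp 2 (H0 × H1) | ∃ x0 : H0,
          x = (WithLp.equiv 2 (H0 × H1)).symm (x0, K x0)},
        L u ∈ {x : WithLp 2 (H0 × H1) | ∃ x0 : H0,
          x = (WithLp.equiv 2 (H0 × H1)).symm (x0, K x0)}) ∧
      (∀ u ∈ {x : WithLp 2 (H0 × H1) | ∃ x1 : H1,
          x = (WithLp.equiv 2 (H0 × H1)).symm (K' x1, x1)},
        L u ∈ {x : WithLp 2 (H0 × H1) | ∃ x1 : H1,
          x = (WithLp.equiv 2 (H0 × H1)).symm (K' x1, x1)}) ∧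
      ({x : WithLp 2 (H0 × H1) | ∃ x0 : H0,
          x = (WithLp.equiv 2 (H0 × H1)).symm (x0, K x0)} ∩
        {x : WithLp 2 (H0 × H1) | ∃ x1 : H1,
          x = (WithLp.equiv 2 (H0 × H1)).symm (K' x1, x1)} = {0}) ∧
      (∀ x : WithLp 2 (H0 × H1),
        ∃ u ∈ {x : WithLp 2 (H0 × H1) | ∃ x0 : H0,
            x = (WithLp.equiv 2 (H0 × H1)).symm (x0, K x0)},
        ∃ v ∈ {x : WithLp 2 (H0 × H1) | ∃ x1 : H1,
            x = (WithLp.equiv 2 (H0 × H1)).symm (K' x1, x1)},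
          x = u + v) := by
  have hBC4 : 4 * ‖B‖ * ‖C‖ < δ ^ 2 := by
    have := (Real.sqrt_lt' (by positivity)).1 hBC
    linarith
  have hCB4 : 4 * ‖C‖ * ‖B‖ < δ ^ 2 := by rwa [mul_right_comm]
  obtain ⟨K, hK, hKr⟩ := exists_riccati_solution A0 A1 B C hδ hSurj hBound
    (riccatiRadius_quadratic hδ hBC4.le).le (two_mul_mul_riccatiRadius_lt hδ hBC4)
  obtain ⟨K', hK', hK'r⟩ := exists_riccati_solution A1 A0 C B hδ hSurj' hBound'
    (riccatiRadius_quadratic hδ hCB4.le).le (two_mul_mul_riccatiRadius_lt hδ hCB4)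
  have hKK' : ‖K‖ * ‖K'‖ < 1 :=
    (mul_le_mul hKr hK'r (norm_nonneg _) ((norm_nonneg _).trans hKr)).trans_lt
      (riccatiRadius_mul_riccatiRadius_swap_lt_one hδ hBC4)
  have hbij := ContinuousLinearMap.bijective_one_sub_comp hKK'
  refine ⟨K, K', ?_, hK, ?_, hK', hKK', mapsTo_graphLp hL hK, mapsTo_graphLp' hL hK',
    graphLp_inter_graphLp' hbij.1, exists_add_mem_graphLp hbij.2⟩
  · exact (mul_le_mul_of_nonneg_left hKr (by positivity)).trans
      (two_mul_mul_riccatiRadius_lt hδ hBC4).le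
  · exact (mul_le_mul_of_nonneg_left hK'r (by positivity)).trans
      (two_mul_mul_riccatiRadius_lt hδ hCB4).le
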